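/- Let G and H be additive commutative groups, ψ: G → H a surjective group homomorphism, R a G-graded commutative ring, and M a G-graded R-module. The natural transformation h_ψ^M: (⨁HOM^G_R(M,•))_[ψ] → ⨁HOM^H_{R_[ψ]}(M_[ψ], •_[ψ]) is an isomorphism (i.e., h_ψ(M,N) is an isomorphism for every G-graded R-module N) if and only if M is small or the kernel of ψ is finite. -/

import Mathlib

/-!
Common vocabulary: internally graded rings and modules, coarsening of gradings,
graded morphisms, and derived notions (injectivity, cogenerators, smallness, ...),
following Rohrer, "Coarsenings, injectives and Hom functors".
-/

open DirectSum

section Defs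

variable {G H R : Type} [AddCommGroup G] [AddCommGroup H] [CommRing R]

/-- The `ψ`-coarsening of a `G`-grading: `(ℳ_[ψ])_h = ⨁_{g ∈ ψ⁻¹(h)} ℳ_g`. -/
def coarsen {M : Type} [AddCommGroup M] (ψ : G →+ H) (ℳ : G → AddSubgroup M) (h : H) :
    AddSubgroup M :=
  ⨆ g ∈ ψ ⁻¹' {h}, ℳ g

/-- `(R, 𝒜)` is a `G`-graded commutative ring: the `𝒜 g` are additive subgroups whose
internal direct sum is `R`, and `𝒜 g * 𝒜 h ⊆ 𝒜 (g + h)`. -/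
def IsGradedRing (𝒜 : G → AddSubgroup R) : Prop :=
  (1 : R) ∈ 𝒜 0 ∧
  (∀ {g h : G} {a b : R}, a ∈ 𝒜 g → b ∈ 𝒜 h → a * b ∈ 𝒜 (g + h)) ∧
  (letI := Classical.decEq G; DirectSum.IsInternal 𝒜)

/-- `(M, ℳ)` is a `G`-graded module over the `G`-graded ring `(R, 𝒜)`. -/
def IsGradedModule {M : Type} [AddCommGroup M] [Module R M]
    (𝒜 : G → AddSubgroup R) (ℳ : G → AddSubgroup M) : Prop :=
  (∀ {g h : G} {r : R} {m : M}, r ∈ 𝒜 g → m ∈ ℳ h → r • m ∈ ℳ (g + h)) ∧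
  (letI := Classical.decEq G; DirectSum.IsInternal ℳ)

/-- A morphism of `G`-graded `R`-modules is an `R`-linear map respecting the gradings. -/
def IsGradedHom {M N : Type} [AddCommGroup M] [Module R M]
    [AddCommGroup N] [Module R N] (ℳ : G → AddSubgroup M) (𝒩 : G → AddSubgroup N)
    (f : M →ₗ[R] N) : Prop :=
  ∀ g : G, ∀ m ∈ ℳ g, f m ∈ 𝒩 g

/-- The grading of a direct sum of graded modules:
`(⨁_i N_i)_g` consists of the elements all of whose components lie in degree `g`. -/
def directSumGrading {ι : Type} {M : ι → Type}
    [∀ i, AddCommGroup (M i)] (ℳ : ∀ i, G → AddSubgroup (M i)) (g : G) :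
    AddSubgroup (⨁ i, M i) where
  carrier := {x | ∀ i, x i ∈ ℳ i g}
  zero_mem' := fun i => by simp only [DirectSum.zero_apply, ZeroMemClass.zero_mem]
  add_mem' := fun {x y} hx hy i => by
    rw [DirectSum.add_apply]; exact add_mem (hx i) (hy i)
  neg_mem' := fun {x} hx i => by
    rw [DFinsupp.neg_apply]; exact neg_mem (hx i)

/-- `(E, ℰ)` is an injective object of the category of `G`-graded `R`-modules:
every graded morphism into `E` extends along every injective graded morphism. -/
def IsInjectiveGradedModule (𝒜 : G → AddSubgroup R) {E : Type} [AddCommGroup E] [Module R E]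
    (ℰ : G → AddSubgroup E) : Prop :=
  ∀ (A B : Type) [AddCommGroup A] [Module R A] [AddCommGroup B] [Module R B],
    ∀ (𝒮A : G → AddSubgroup A) (𝒮B : G → AddSubgroup B),
      IsGradedModule 𝒜 𝒮A → IsGradedModule 𝒜 𝒮B →
      ∀ i : A →ₗ[R] B, Function.Injective i → IsGradedHom 𝒮A 𝒮B i →
      ∀ f : A →ₗ[R] E, IsGradedHom 𝒮A ℰ f →
      ∃ g : B →ₗ[R] E, IsGradedHom 𝒮B ℰ g ∧ g ∘ₗ i = f

/-- `(M, ℳ)` is a cogenerator of the category of `G`-graded `R`-modules: every nonzero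
graded morphism is detected by a graded morphism into `M`. -/
def IsCogenerator (𝒜 : G → AddSubgroup R) {M : Type} [AddCommGroup M] [Module R M]
    (ℳ : G → AddSubgroup M) : Prop :=
  ∀ (N N' : Type) [AddCommGroup N] [Module R N] [AddCommGroup N'] [Module R N'],
    ∀ (𝒩 : G → AddSubgroup N) (𝒩' : G → AddSubgroup N'),
      IsGradedModule 𝒜 𝒩 → IsGradedModule 𝒜 𝒩' →
      ∀ u : N →ₗ[R] N', IsGradedHom 𝒩 𝒩' u → u ≠ 0 →
      ∃ v : N' →ₗ[R] M, IsGradedHom 𝒩' ℳ v ∧ v ∘ₗ u ≠ 0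

/-- `M` is a small graded module: every graded morphism from `M` into a direct sum of
graded modules factors through a finite sub-sum. -/
def IsSmall (𝒜 : G → AddSubgroup R) {M : Type} [AddCommGroup M] [Module R M]
    (ℳ : G → AddSubgroup M) : Prop :=
  ∀ (ι : Type) (N : ι → Type) [∀ i, AddCommGroup (N i)] [∀ i, Module R (N i)],
    ∀ (𝒩 : ∀ i, G → AddSubgroup (N i)), (∀ i, IsGradedModule 𝒜 (𝒩 i)) →
      ∀ f : M →ₗ[R] ⨁ i, N i, IsGradedHom ℳ (directSumGrading 𝒩) f →
        ∃ s : Finset ι, ∀ (m : M) (i : ι), i ∉ s → f m i = 0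

/-- `M` is `P`-small: every graded morphism from `M` into a direct sum of copies of `P`
factors through a finite sub-sum. -/
def IsSmallWrt {P : Type} [AddCommGroup P] [Module R P] (𝒬 : G → AddSubgroup P)
    {M : Type} [AddCommGroup M] [Module R M] (ℳ : G → AddSubgroup M) : Prop :=
  ∀ (ι : Type) (f : M →ₗ[R] ⨁ (_ : ι), P),
    IsGradedHom ℳ (directSumGrading fun (_ : ι) => 𝒬) f →
      ∃ s : Finset ι, ∀ (m : M) (i : ι), i ∉ s → f m i = 0

/-- A `G`-graded ring is steady if all small graded modules over it are finitely generated. -/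
def IsSteady (𝒜 : G → AddSubgroup R) : Prop :=
  ∀ (M : Type) [AddCommGroup M] [Module R M], ∀ ℳ : G → AddSubgroup M,
    IsGradedModule 𝒜 ℳ → IsSmall 𝒜 ℳ → Module.Finite R M

/-- A graded ideal of the `G`-graded ring `(R, 𝒜)`: `I = ⨁_g (I ∩ R_g)`. -/
def IsGradedIdeal (𝒜 : G → AddSubgroup R) (I : Ideal R) : Prop :=
  I.toAddSubgroup = ⨆ g : G, I.toAddSubgroup ⊓ 𝒜 g

/-- A simple `G`-graded `R`-module: nonzero, and its only graded submodules are `0` and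
the whole module. -/
def IsSimpleGradedModule (𝒜 : G → AddSubgroup R) {S : Type} [AddCommGroup S] [Module R S]
    (𝒮 : G → AddSubgroup S) : Prop :=
  IsGradedModule 𝒜 𝒮 ∧ Nontrivial S ∧
    ∀ P : Submodule R S, (P.toAddSubgroup = ⨆ g : G, P.toAddSubgroup ⊓ 𝒮 g) →
      P = ⊥ ∨ P = ⊤

/-- The subgroup of `M →ₗ[R] N` consisting of the graded morphisms `M → N(g)`, i.e. the
degree-`g` component of the graded Hom module `⨁HOM(M, N)`. -/
def gradedHomSubgroup {M N : Type} [AddCommGroup M] [Module R M] [AddCommGroup N] [Module R N]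
    (ℳ : G → AddSubgroup M) (𝒩 : G → AddSubgroup N) (g : G) : AddSubgroup (M →ₗ[R] N) where
  carrier := {u | ∀ g' : G, ∀ m ∈ ℳ g', u m ∈ 𝒩 (g + g')}
  zero_mem' := fun g' m _ => by simp only [LinearMap.zero_apply, ZeroMemClass.zero_mem]
  add_mem' := fun {u v} hu hv g' m hm => by
    rw [LinearMap.add_apply]; exact add_mem (hu g' m hm) (hv g' m hm)
  neg_mem' := fun {u} hu g' m hm => by
    rw [LinearMap.neg_apply]; exact neg_mem (hu g' m hm)

end Defs


/-!
Every linear map `u : M → N` has graded components `u_g ∈ Hom(M, N(g))`, sending `m ∈ M_k` to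
the degree-`(g + k)` part of `u m`, and `u` lies in `⨁HOM^G(M, N)` exactly when only finitely
many `u_g` are nonzero. If `u` is homogeneous of degree `h` for the coarsened gradings, its
nonzero components have degrees in `ψ⁻¹(h)`, a coset of `ker ψ`; if `M` is small, finiteness
comes from applying smallness to `m ↦ (u_g m)_g ∈ ⨁_g N(g)`.

Conversely, let `f : M → ⨁_i N_i` be a degree-`0` map with infinitely many nonzero coordinates.
Shifting the grading of each `N_i` by some `d_i ∈ ker ψ` does not change the coarsening, so `f`
stays coarsely homogeneous; but its `G`-component of degree `-d_i` has nonzero `i`-th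
coordinate, so infinitely many distinct `d_i` give infinitely many nonzero components.
-/

namespace DirectSum

section Decomposition

variable {ι M : Type*} [DecidableEq ι] [AddCommGroup M] (ℳ : ι → AddSubgroup M) [Decomposition ℳ]

theorem decompose_eq_zero_of_mem_biSup {s : Set ι} {j : ι} (hj : j ∉ s) {m : M}
    (hm : m ∈ ⨆ i ∈ s, ℳ i) : decompose ℳ m j = 0 := by
  have hle : ⨆ i ∈ s, ℳ i ≤ ((DFinsupp.evalAddMonoidHom j).comp
      (decomposeAddEquiv ℳ).toAddMonoidHom).ker :=
    iSup₂_le fun i hi x hx => Subtype.ext (decompose_of_mem_ne ℳ hx (ne_of_mem_of_not_mem hi hj))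
  exact hle hm

theorem sum_decompose_of_forall_notMem (m : M) {s : Finset ι}
    (hs : ∀ j ∉ s, decompose ℳ m j = 0) : ∑ j ∈ s, (decompose ℳ m j : M) = m := by
  classical
  conv_rhs => rw [← sum_support_decompose ℳ m]
  refine (Finset.sum_subset (fun j hj => ?_) fun j _ hj => ?_).symm
  · by_contra hjs
    exact DFinsupp.mem_support_iff.1 hj (hs j hjs)
  · rw [DFinsupp.notMem_support_iff.1 hj, ZeroMemClass.coe_zero]

theorem decompose_linearMap_ext {R N : Type*} [Semiring R] [Module R M] [AddCommMonoid N]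
    [Module R N] {u v : M →ₗ[R] N} (h : ∀ k, ∀ m ∈ ℳ k, u m = v m) : u = v := by
  ext m
  induction m using Decomposition.inductionOn ℳ with
  | zero => simp
  | homogeneous m => exact h _ m m.2
  | add m m' hm hm' => simp only [map_add, hm, hm']

variable {R : Type*} [Ring R] [Module R M] [Add ι] [IsLeftCancelAdd ι] (𝒜 : ι → AddSubgroup R)
  [SetLike.GradedSMul 𝒜 ℳ]

theorem coe_decompose_smul_add_of_mem {r : R} {a : ι} (hr : r ∈ 𝒜 a) (j : ι) (m : M) :
    (decompose ℳ (r • m) (a + j) : M) = r • (decompose ℳ m j : M) := by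
  induction m using Decomposition.inductionOn ℳ with
  | zero => simp
  | homogeneous x =>
    have hrx : r • (x : M) ∈ ℳ (a + _) := SetLike.GradedSMul.smul_mem hr x.2
    rw [decompose_coe, decompose_of_mem ℳ hrx, coe_of_apply, coe_of_apply]
    simp only [add_right_inj]
    split_ifs <;> simp
  | add x y hx hy => simp only [smul_add, decompose_add, add_apply, AddSubgroup.coe_add, hx, hy]

end Decomposition

end DirectSum

section GradedComponent

variable {G R M N : Type} [AddCommGroup G] [DecidableEq G] [CommRing R]
  [AddCommGroup M] [Module R M] [AddCommGroup N] [Module R N]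

section AddHom

variable (ℳ : G → AddSubgroup M) (𝒩 : G → AddSubgroup N) [Decomposition ℳ] [Decomposition 𝒩]

noncomputable def gradedComponentAddHom (u : M →ₗ[R] N) (g : G) : M →+ N :=
  (toAddMonoid fun k => ((𝒩 (g + k)).subtype.comp ((DFinsupp.evalAddMonoidHom (g + k)).comp
    (decomposeAddEquiv 𝒩).toAddMonoidHom)).comp (u.toAddMonoidHom.comp (ℳ k).subtype)).comp
    (decomposeAddEquiv ℳ).toAddMonoidHom

variable {ℳ 𝒩} in
theorem gradedComponentAddHom_apply_of_mem (u : M →ₗ[R] N) (g : G) {k : G} {m : M}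
    (hm : m ∈ ℳ k) : gradedComponentAddHom ℳ 𝒩 u g m = decompose 𝒩 (u m) (g + k) := by
  simp [gradedComponentAddHom, decomposeAddEquiv, decompose_of_mem ℳ hm]
  rfl

theorem gradedComponentAddHom_smul (𝒜 : G → AddSubgroup R) [Decomposition 𝒜]
    [SetLike.GradedSMul 𝒜 ℳ] [SetLike.GradedSMul 𝒜 𝒩] (u : M →ₗ[R] N) (g : G) (r : R) (m : M) :
    gradedComponentAddHom ℳ 𝒩 u g (r • m) = r • gradedComponentAddHom ℳ 𝒩 u g m := by
  induction r using Decomposition.inductionOn 𝒜 with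
  | zero => simp
  | add r s hr hs => simp only [add_smul, map_add, hr, hs]
  | homogeneous r =>
    induction m using Decomposition.inductionOn ℳ with
    | zero => simp
    | add m m' hm hm' => simp only [smul_add, map_add, hm, hm']
    | @homogeneous k m =>
      have hrm : (r : R) • (m : M) ∈ ℳ (_ + k) := SetLike.GradedSMul.smul_mem r.2 m.2
      rw [gradedComponentAddHom_apply_of_mem u g hrm, gradedComponentAddHom_apply_of_mem u g m.2,
        map_smul, add_left_comm, coe_decompose_smul_add_of_mem 𝒩 𝒜 r.2]

end AddHom

variable (𝒜 : G → AddSubgroup R) (ℳ : G → AddSubgroup M) (𝒩 : G → AddSubgroup N)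
  [Decomposition 𝒜] [Decomposition ℳ] [Decomposition 𝒩]
  [SetLike.GradedSMul 𝒜 ℳ] [SetLike.GradedSMul 𝒜 𝒩]

noncomputable def gradedComponent (u : M →ₗ[R] N) (g : G) : M →ₗ[R] N :=
  { gradedComponentAddHom ℳ 𝒩 u g with
    map_smul' := gradedComponentAddHom_smul ℳ 𝒩 𝒜 u g }

variable {𝒜 ℳ 𝒩}

theorem gradedComponent_apply_of_mem (u : M →ₗ[R] N) (g : G) {k : G} {m : M}
    (hm : m ∈ ℳ k) : gradedComponent 𝒜 ℳ 𝒩 u g m = decompose 𝒩 (u m) (g + k) :=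
  gradedComponentAddHom_apply_of_mem u g hm

theorem gradedComponent_mem_gradedHomSubgroup (u : M →ₗ[R] N) (g : G) :
    gradedComponent 𝒜 ℳ 𝒩 u g ∈ gradedHomSubgroup ℳ 𝒩 g := fun k m hm => by
  rw [gradedComponent_apply_of_mem u g hm]
  exact (decompose 𝒩 (u m) (g + k)).2

end GradedComponent

section GradedSupport

variable {G R M N : Type} [AddCommGroup G] [DecidableEq G] [CommRing R]
  [AddCommGroup M] [Module R M] [AddCommGroup N] [Module R N]
  (𝒜 : G → AddSubgroup R) (ℳ : G → AddSubgroup M) (𝒩 : G → AddSubgroup N)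
  [Decomposition 𝒜] [Decomposition ℳ] [Decomposition 𝒩]
  [SetLike.GradedSMul 𝒜 ℳ] [SetLike.GradedSMul 𝒜 𝒩]

def gradedSupport (u : M →ₗ[R] N) : Set G :=
  {g | gradedComponent 𝒜 ℳ 𝒩 u g ≠ 0}

variable {𝒜 ℳ 𝒩}

theorem gradedComponent_add (u v : M →ₗ[R] N) (g : G) :
    gradedComponent 𝒜 ℳ 𝒩 (u + v) g = gradedComponent 𝒜 ℳ 𝒩 u g + gradedComponent 𝒜 ℳ 𝒩 v g :=
  decompose_linearMap_ext ℳ fun k m hm => by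
    simp only [LinearMap.add_apply, gradedComponent_apply_of_mem _ g hm, decompose_add,
      DirectSum.add_apply, AddSubgroup.coe_add]

theorem gradedSupport_add_subset (u v : M →ₗ[R] N) :
    gradedSupport 𝒜 ℳ 𝒩 (u + v) ⊆ gradedSupport 𝒜 ℳ 𝒩 u ∪ gradedSupport 𝒜 ℳ 𝒩 v := by
  intro g hg
  by_contra! h
  simp only [gradedSupport, Set.mem_union, Set.mem_ofPred_eq, not_or, not_not] at hg h
  exact hg (by rw [gradedComponent_add, h.1, h.2, add_zero])

theorem gradedSupport_zero : gradedSupport 𝒜 ℳ 𝒩 (0 : M →ₗ[R] N) = ∅ := by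
  refine Set.eq_empty_of_forall_notMem fun g hg => hg (decompose_linearMap_ext ℳ fun k m hm => ?_)
  simp [gradedComponent_apply_of_mem _ g hm]

theorem gradedSupport_subset_of_mem_gradedHomSubgroup {u : M →ₗ[R] N} {g₀ : G}
    (hu : u ∈ gradedHomSubgroup ℳ 𝒩 g₀) : gradedSupport 𝒜 ℳ 𝒩 u ⊆ {g₀} := by
  intro g hg
  by_contra hne
  refine hg (decompose_linearMap_ext ℳ fun k m hm => ?_)
  rw [gradedComponent_apply_of_mem u g hm, decompose_of_mem_ne 𝒩 (hu k m hm)]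
  · rfl
  · simpa using Ne.symm hne

theorem eq_sum_gradedComponent {u : M →ₗ[R] N} {s : Finset G}
    (hs : gradedSupport 𝒜 ℳ 𝒩 u ⊆ s) : u = ∑ g ∈ s, gradedComponent 𝒜 ℳ 𝒩 u g := by
  refine decompose_linearMap_ext ℳ fun k m hm => ?_
  have hvanish : ∀ j ∉ s.map (addRightEmbedding k), decompose 𝒩 (u m) j = 0 := by
    intro j hj
    have hjk : j - k ∉ gradedSupport 𝒜 ℳ 𝒩 u := fun h =>
      hj (Finset.mem_map.2 ⟨j - k, hs h, sub_add_cancel j k⟩)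
    simp only [gradedSupport, Set.mem_ofPred_eq, not_not] at hjk
    have := gradedComponent_apply_of_mem (𝒜 := 𝒜) (𝒩 := 𝒩) u (j - k) hm
    rw [hjk, sub_add_cancel] at this
    exact Subtype.ext this.symm
  simp only [LinearMap.sum_apply, gradedComponent_apply_of_mem u _ hm]
  exact (sum_decompose_of_forall_notMem 𝒩 (u m) hvanish).symm.trans (Finset.sum_map _ _ _)

theorem mem_iSup_gradedHomSubgroup_iff (u : M →ₗ[R] N) :
    u ∈ ⨆ g, gradedHomSubgroup ℳ 𝒩 g ↔ (gradedSupport 𝒜 ℳ 𝒩 u).Finite := by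
  refine ⟨fun hu => ?_, fun hfin => ?_⟩
  · refine AddSubgroup.iSup_induction (C := fun v => (gradedSupport 𝒜 ℳ 𝒩 v).Finite) _ hu
      (fun g₀ v hv => ?_) (by simp [gradedSupport_zero])
      fun v w hv hw => (hv.union hw).subset (gradedSupport_add_subset v w)
    exact (Set.finite_singleton g₀).subset (gradedSupport_subset_of_mem_gradedHomSubgroup hv)
  · rw [eq_sum_gradedComponent hfin.coe_toFinset.ge]
    exact AddSubgroup.sum_mem _ fun g _ => AddSubgroup.mem_iSup_of_mem g
      (gradedComponent_mem_gradedHomSubgroup u g)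

end GradedSupport

section Coarsening

variable {G H R M N : Type} [AddCommGroup G] [AddCommGroup H] [CommRing R]
  [AddCommGroup M] [Module R M] [AddCommGroup N] [Module R N] (ψ : G →+ H)

theorem le_coarsen (ℳ : G → AddSubgroup M) (g : G) : ℳ g ≤ coarsen ψ ℳ (ψ g) :=
  le_iSup₂_of_le (f := fun k (_ : k ∈ ψ ⁻¹' {ψ g}) => ℳ k) g rfl le_rfl

variable {ψ} {ℳ : G → AddSubgroup M} {𝒩 : G → AddSubgroup N}

theorem gradedHomSubgroup_le_coarsen (g : G) :
    gradedHomSubgroup (R := R) ℳ 𝒩 g ≤ gradedHomSubgroup (coarsen ψ ℳ) (coarsen ψ 𝒩) (ψ g) := by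
  intro u hu h m hm
  have hle : coarsen ψ ℳ h ≤ (coarsen ψ 𝒩 (ψ g + h)).comap u.toAddMonoidHom :=
    iSup₂_le fun k hk x hx => by
      have hψ : ψ (g + k) = ψ g + h := by rw [map_add, Set.eq_of_mem_singleton hk]
      exact hψ ▸ le_coarsen ψ 𝒩 (g + k) (hu k x hx)
  exact hle hm

theorem gradedSupport_subset_preimage_of_mem_coarsen [DecidableEq G] {𝒜 : G → AddSubgroup R}
    [Decomposition 𝒜] [Decomposition ℳ] [Decomposition 𝒩]
    [SetLike.GradedSMul 𝒜 ℳ] [SetLike.GradedSMul 𝒜 𝒩] {u : M →ₗ[R] N} {h : H}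
    (hu : u ∈ gradedHomSubgroup (coarsen ψ ℳ) (coarsen ψ 𝒩) h) :
    gradedSupport 𝒜 ℳ 𝒩 u ⊆ ψ ⁻¹' {h} := by
  intro g hg
  by_contra hgh
  refine hg (decompose_linearMap_ext ℳ fun k m hm => ?_)
  have hgk : g + k ∉ ψ ⁻¹' {h + ψ k} := by simpa using hgh
  rw [gradedComponent_apply_of_mem u g hm, LinearMap.zero_apply,
    decompose_eq_zero_of_mem_biSup 𝒩 hgk (hu (ψ k) m (le_coarsen ψ ℳ k hm)),
    ZeroMemClass.coe_zero]

theorem AddMonoidHom.finite_preimage_singleton [Finite ψ.ker] (h : H) :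
    (ψ ⁻¹' {h}).Finite := by
  rcases (ψ ⁻¹' {h}).eq_empty_or_nonempty with he | ⟨g₀, hg₀⟩
  · simp [he]
  refine ((Set.toFinite (ψ.ker : Set G)).image (g₀ + ·)).subset fun g hg =>
    ⟨g - g₀, ?_, add_sub_cancel g₀ g⟩
  simp_all [AddMonoidHom.mem_ker]

end Coarsening

namespace DirectSum

theorem IsInternal.comp_equiv {ι κ M σ : Type*} [DecidableEq ι] [DecidableEq κ] [AddCommMonoid M]
    [SetLike σ M] [AddSubmonoidClass σ M] {A : ι → σ} (h : IsInternal A) (e : κ ≃ ι) :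
    IsInternal fun k => A (e k) := by
  have hcoe : DirectSum.coeAddMonoidHom (fun k => A (e k)) = (DirectSum.coeAddMonoidHom A).comp
      (equivCongrLeft (β := fun i => A i) e.symm).symm.toAddMonoidHom := by
    ext k x
    have hof : (equivCongrLeft (β := fun i => A i) e.symm).symm (of (fun k => A (e k)) k x) =
        of _ (e k) x :=
      (AddEquiv.symm_apply_eq _).2 (equivCongrLeft_of (β := fun i => A i) e.symm k x).symm
    simp [hof]
  rw [IsInternal, hcoe]
  exact h.comp (AddEquiv.bijective _)

end DirectSum

section GradedModule

variable {G R : Type} [AddCommGroup G] [CommRing R] {𝒜 : G → AddSubgroup R}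

theorem IsGradedModule.isInternal [DecidableEq G] {M : Type} [AddCommGroup M] [Module R M]
    {ℳ : G → AddSubgroup M} (h : IsGradedModule 𝒜 ℳ) : IsInternal ℳ := by
  convert h.2

theorem IsGradedModule.gradedSMul {M : Type} [AddCommGroup M] [Module R M]
    {ℳ : G → AddSubgroup M} (h : IsGradedModule 𝒜 ℳ) : SetLike.GradedSMul 𝒜 ℳ :=
  ⟨fun _ _ _ _ => h.1⟩

theorem isGradedModule_of_decomposition [DecidableEq G] {M : Type} [AddCommGroup M] [Module R M]
    (ℳ : G → AddSubgroup M) [Decomposition ℳ] [SetLike.GradedSMul 𝒜 ℳ] :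
    IsGradedModule 𝒜 ℳ :=
  ⟨fun hr hm => SetLike.GradedSMul.smul_mem hr hm, by convert Decomposition.isInternal ℳ⟩

theorem IsGradedModule.shift {M : Type} [AddCommGroup M] [Module R M] {ℳ : G → AddSubgroup M}
    (h : IsGradedModule 𝒜 ℳ) (a : G) : IsGradedModule 𝒜 fun k => ℳ (a + k) := by
  refine ⟨fun {g k r m} hr hm => ?_, ?_⟩
  · simpa only [add_left_comm g a k] using h.1 hr hm
  · classical
    exact h.isInternal.comp_equiv (Equiv.addLeft a)

end GradedModule

section DirectSumGrading

variable {G ι : Type} {N : ι → Type}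
  [∀ i, AddCommGroup (N i)] (𝒩 : ∀ i, G → AddSubgroup (N i))

def directSumGradingComponent (i : ι) (g : G) : directSumGrading 𝒩 g →+ 𝒩 i g where
  toFun x := ⟨(x : ⨁ i, N i) i, x.2 i⟩
  map_zero' := rfl
  map_add' _ _ := rfl

theorem of_mem_directSumGrading [DecidableEq ι] {i : ι} {g : G} {y : N i} (hy : y ∈ 𝒩 i g) :
    of N i y ∈ directSumGrading 𝒩 g := fun j => by
  by_cases hij : i = j
  · subst hij
    simpa using hy
  · rw [of_eq_of_ne _ _ _ (Ne.symm hij)]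
    exact zero_mem _

def directSumGradingInclusion [DecidableEq ι] (i : ι) (g : G) :
    𝒩 i g →+ directSumGrading 𝒩 g where
  toFun y := ⟨of N i y, of_mem_directSumGrading 𝒩 y.2⟩
  map_zero' := by ext; simp
  map_add' _ _ := by ext; simp

theorem isInternal_directSumGrading [DecidableEq G] [DecidableEq ι]
    (h𝒩 : ∀ i, IsInternal (𝒩 i)) : IsInternal (directSumGrading 𝒩) := by
  have hcomponent : ∀ i,
      (DFinsupp.evalAddMonoidHom i).comp (DirectSum.coeAddMonoidHom (directSumGrading 𝒩)) =
        (DirectSum.coeAddMonoidHom (𝒩 i)).comp (map (directSumGradingComponent 𝒩 i)) := by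
    intro i; ext g x; rfl
  have hinclusion : ∀ i, (DirectSum.coeAddMonoidHom (directSumGrading 𝒩)).comp
      (map (directSumGradingInclusion 𝒩 i)) = (of N i).comp (DirectSum.coeAddMonoidHom (𝒩 i)) := by
    intro i; ext g y; simp [directSumGradingInclusion]
  refine ⟨(injective_iff_map_eq_zero _).2 fun z hz => ?_, fun x => ?_⟩
  · ext g i
    have hzi := DFunLike.congr_fun (hcomponent i) z
    simp only [AddMonoidHom.comp_apply, hz, map_zero] at hzi
    have hmap : map (directSumGradingComponent 𝒩 i) z = 0 :=
      (injective_iff_map_eq_zero _).1 (h𝒩 i).1 _ hzi.symm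
    have hzgi := DFunLike.congr_fun hmap g
    rw [map_apply, DirectSum.zero_apply] at hzgi
    exact congrArg Subtype.val hzgi
  · induction x using DirectSum.induction_on with
    | zero => exact ⟨0, map_zero _⟩
    | of i y =>
      obtain ⟨w, rfl⟩ := (h𝒩 i).2 y
      exact ⟨_, DFunLike.congr_fun (hinclusion i) w⟩
    | add x y hx hy =>
      obtain ⟨⟨a, rfl⟩, ⟨b, rfl⟩⟩ := And.intro hx hy
      exact ⟨a + b, map_add _ a b⟩

theorem coe_decompose_directSumGrading_apply [DecidableEq G] [Decomposition (directSumGrading 𝒩)]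
    [∀ i, Decomposition (𝒩 i)] (x : ⨁ i, N i) (g : G) (i : ι) :
    (decompose (directSumGrading 𝒩) x g : ⨁ i, N i) i = decompose (𝒩 i) (x i) g := by
  induction x using Decomposition.inductionOn (directSumGrading 𝒩) with
  | zero => simp
  | @homogeneous k x =>
    rw [decompose_coe, decompose_of_mem (𝒩 i) (x.2 i), coe_of_apply, coe_of_apply]
    split_ifs <;> rfl
  | add x y hx hy => simp [decompose_add, hx, hy]

theorem isGradedModule_directSumGrading [AddCommGroup G] {R : Type} [CommRing R]
    {𝒜 : G → AddSubgroup R} [∀ i, Module R (N i)] (h𝒩 : ∀ i, IsGradedModule 𝒜 (𝒩 i)) :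
    IsGradedModule 𝒜 (directSumGrading 𝒩) := by
  refine ⟨fun hr hx i => ?_, ?_⟩
  · rw [DirectSum.smul_apply]
    exact (h𝒩 i).1 hr (hx i)
  · classical
    convert isInternal_directSumGrading 𝒩 fun i => (h𝒩 i).isInternal

end DirectSumGrading

section Small

variable {G R M N : Type} [AddCommGroup G] [DecidableEq G] [CommRing R]
  [AddCommGroup M] [Module R M] [AddCommGroup N] [Module R N]
  {𝒜 : G → AddSubgroup R} {ℳ : G → AddSubgroup M} {𝒩 : G → AddSubgroup N}
  [Decomposition 𝒜] [Decomposition ℳ] [Decomposition 𝒩]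
  [SetLike.GradedSMul 𝒜 ℳ] [SetLike.GradedSMul 𝒜 𝒩]

variable (ℳ 𝒩) in
noncomputable def gradedComponentsAddHom (u : M →ₗ[R] N) : M →+ ⨁ _ : G, N :=
  (toAddMonoid fun k =>
    (AddMonoidHom.mk' (fun y => map (fun g => (𝒩 (g + k)).subtype)
        (DFinsupp.comapDomain (· + k) (add_left_injective k) (decompose 𝒩 y)))
      fun y y' => by rw [decompose_add, DFinsupp.comapDomain_add, map_add]).comp
    (u.toAddMonoidHom.comp (ℳ k).subtype)).comp (decomposeAddEquiv ℳ).toAddMonoidHom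

theorem gradedComponentsAddHom_apply (u : M →ₗ[R] N) (m : M) (g : G) :
    gradedComponentsAddHom ℳ 𝒩 u m g = gradedComponent 𝒜 ℳ 𝒩 u g m := by
  induction m using Decomposition.inductionOn ℳ with
  | zero => simp
  | @homogeneous k m =>
    rw [gradedComponent_apply_of_mem u g m.2]
    simp [gradedComponentsAddHom, decomposeAddEquiv]
  | add m m' hm hm' => simp only [map_add, DirectSum.add_apply, hm, hm']

theorem IsSmall.gradedSupport_finite (hM : IsSmall 𝒜 ℳ) (u : M →ₗ[R] N) :
    (gradedSupport 𝒜 ℳ 𝒩 u).Finite := by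
  let F : M →ₗ[R] ⨁ _ : G, N :=
    { gradedComponentsAddHom ℳ 𝒩 u with
      map_smul' := fun r m => by
        ext g
        simp [DirectSum.smul_apply, gradedComponentsAddHom_apply (𝒜 := 𝒜)] }
  have hF : IsGradedHom ℳ (directSumGrading fun g k => 𝒩 (g + k)) F := fun k m hm g => by
    change gradedComponentsAddHom ℳ 𝒩 u m g ∈ 𝒩 (g + k)
    rw [gradedComponentsAddHom_apply (𝒜 := 𝒜), gradedComponent_apply_of_mem u g hm]
    exact SetLike.coe_mem _
  obtain ⟨s, hs⟩ := hM G (fun _ => N) (fun g k => 𝒩 (g + k))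
    (fun g => (isGradedModule_of_decomposition 𝒩).shift g) F hF
  refine s.finite_toSet.subset fun g hg => ?_
  by_contra hgs
  refine hg (LinearMap.ext fun m => ?_)
  have := hs m g hgs
  simpa [F, gradedComponentsAddHom_apply (𝒜 := 𝒜)] using this

end Small

theorem Set.Infinite.exists_infinite_image {α β : Type*} [Infinite β] {s : Set α}
    (hs : s.Infinite) : ∃ f : α → β, (f '' s).Infinite := by
  let e : ℕ → α := fun n => hs.natEmbedding s n
  have he : Function.Injective e := Subtype.val_injective.comp (hs.natEmbedding s).injective
  let c := _root_.Infinite.natEmbedding β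
  refine ⟨Function.extend e c fun _ => c 0, (Set.infinite_range_of_injective c.injective).mono ?_⟩
  rintro _ ⟨n, rfl⟩
  exact ⟨e n, (hs.natEmbedding s n).2, he.extend_apply _ _ n⟩

section Shift

variable {G H R M ι : Type} [AddCommGroup G] [CommRing R] [AddCommGroup M] [Module R M]
  {ℳ : G → AddSubgroup M} {N : ι → Type} [∀ i, AddCommGroup (N i)] [∀ i, Module R (N i)]
  {𝒩 : ∀ i, G → AddSubgroup (N i)} {f : M →ₗ[R] ⨁ i, N i}

/-- Shifting the summands of a graded direct sum by degrees in `ker ψ` does not change its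
`ψ`-coarsening. -/
theorem IsGradedHom.mem_gradedHomSubgroup_coarsen_shift [AddCommGroup H] {ψ : G →+ H}
    (hf : IsGradedHom ℳ (directSumGrading 𝒩) f) {d : ι → G} (hd : ∀ i, ψ (d i) = 0) :
    f ∈ gradedHomSubgroup (coarsen ψ ℳ)
      (coarsen ψ (directSumGrading fun i k => 𝒩 i (d i + k))) 0 := by
  classical
  have hle : ∀ g, directSumGrading 𝒩 g ≤
      coarsen ψ (directSumGrading fun i k => 𝒩 i (d i + k)) (ψ g) := fun g x hx => by
    rw [← sum_support_of x]
    refine AddSubgroup.sum_mem _ fun i _ => ?_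
    have hxi : of N i (x i) ∈ directSumGrading (fun i k => 𝒩 i (d i + k)) (g - d i) :=
      of_mem_directSumGrading _ (by simpa using hx i)
    simpa [hd] using le_coarsen ψ _ (g - d i) hxi
  intro h m hm
  rw [zero_add]
  have hcoarse : coarsen ψ ℳ h ≤ (coarsen ψ (directSumGrading fun i k => 𝒩 i (d i + k)) h).comap
      f.toAddMonoidHom := iSup₂_le fun g hg m hm => by
    rw [← Set.eq_of_mem_singleton hg]
    exact hle g (hf g m hm)
  exact hcoarse hm

theorem finite_image_of_mem_iSup_gradedHomSubgroup_shift [DecidableEq G] {𝒜 : G → AddSubgroup R}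
    [Decomposition 𝒜] [Decomposition ℳ] [SetLike.GradedSMul 𝒜 ℳ]
    (h𝒩 : ∀ i, IsGradedModule 𝒜 (𝒩 i)) (hf : IsGradedHom ℳ (directSumGrading 𝒩) f) (d : ι → G)
    (hfd : f ∈ ⨆ g, gradedHomSubgroup ℳ (directSumGrading fun i k => 𝒩 i (d i + k)) g) :
    (d '' {i | ∃ m, f m i ≠ 0}).Finite := by
  have h𝒩' : ∀ i, IsGradedModule 𝒜 fun k => 𝒩 i (d i + k) := fun i => (h𝒩 i).shift (d i)
  let := fun i => (h𝒩' i).isInternal.chooseDecomposition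
  have hD := isGradedModule_directSumGrading _ h𝒩'
  let := hD.isInternal.chooseDecomposition
  have := hD.gradedSMul
  refine (((mem_iSup_gradedHomSubgroup_iff (𝒜 := 𝒜) f).1 hfd).image Neg.neg).subset ?_
  rintro _ ⟨i, ⟨m, hm⟩, rfl⟩
  refine ⟨-d i, fun h0 => hm ?_, neg_neg _⟩
  have hcoord : ∀ m,
      (gradedComponent 𝒜 ℳ (directSumGrading fun i k => 𝒩 i (d i + k)) f (-d i) m) i = f m i := by
    intro m
    induction m using Decomposition.inductionOn ℳ with
    | zero => simp
    | @homogeneous k m =>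
      rw [gradedComponent_apply_of_mem f _ m.2, coe_decompose_directSumGrading_apply]
      exact decompose_of_mem_same _ (by simpa using hf k m m.2 i)
    | add m m' hm hm' => simp only [map_add, DirectSum.add_apply, hm, hm']
  rw [← hcoord m, h0]
  rfl

end Shift

/-- Since `h_ψ(M, N)` is injective, it is an isomorphism exactly when the two subgroups of
`M →ₗ[R] N` below coincide. -/
theorem gradedHom_coarsening_iso_iff_small_or_ker_finite_general
    {G H R M : Type} [AddCommGroup G] [AddCommGroup H] [CommRing R]
    [AddCommGroup M] [Module R M]
    (ψ : G →+ H)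
    (𝒜 : G → AddSubgroup R) (h𝒜 : IsGradedRing 𝒜)
    (ℳ : G → AddSubgroup M) (hℳ : IsGradedModule 𝒜 ℳ) :
    (∀ (N : Type) [AddCommGroup N] [Module R N], ∀ 𝒩 : G → AddSubgroup N,
        IsGradedModule 𝒜 𝒩 →
          (⨆ g : G, gradedHomSubgroup (R := R) ℳ 𝒩 g)
            = ⨆ h : H, gradedHomSubgroup (R := R) (coarsen ψ ℳ) (coarsen ψ 𝒩) h) ↔
      (IsSmall 𝒜 ℳ ∨ Finite ψ.ker) := by
  classical
  let := h𝒜.2.2.chooseDecomposition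
  let := hℳ.isInternal.chooseDecomposition
  have := hℳ.gradedSMul
  constructor
  · refine fun hiso => or_iff_not_imp_right.2 fun hker ι N _ _ 𝒩 h𝒩 f hf => ?_
    have : Infinite ψ.ker := not_finite_iff_infinite.1 hker
    by_contra! hnot
    have hS : {i | ∃ m, f m i ≠ 0}.Infinite := fun hfin => by
      obtain ⟨m, i, hi, hne⟩ := hnot hfin.toFinset
      exact hi (hfin.mem_toFinset.2 ⟨m, hne⟩)
    obtain ⟨d, hd⟩ := hS.exists_infinite_image (β := ψ.ker)
    have hfd : f ∈ ⨆ g, gradedHomSubgroup ℳ (directSumGrading fun i k => 𝒩 i (d i + k)) g := by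
      rw [hiso _ _ (isGradedModule_directSumGrading _ fun i => (h𝒩 i).shift (d i))]
      exact AddSubgroup.mem_iSup_of_mem 0
        (hf.mem_gradedHomSubgroup_coarsen_shift fun i => (d i).2)
    refine hd (Set.Finite.of_finite_image ?_ Subtype.val_injective.injOn)
    rw [← Set.image_comp]
    exact finite_image_of_mem_iSup_gradedHomSubgroup_shift h𝒩 hf _ hfd
  · intro hM N _ _ 𝒩 h𝒩
    let := h𝒩.isInternal.chooseDecomposition
    have := h𝒩.gradedSMul
    refine le_antisymm (iSup_le fun g => (gradedHomSubgroup_le_coarsen g).trans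
      (le_iSup (fun h => gradedHomSubgroup (coarsen ψ ℳ) (coarsen ψ 𝒩) h) (ψ g)))
      (iSup_le fun h u hu => (mem_iSup_gradedHomSubgroup_iff (𝒜 := 𝒜) u).2 ?_)
    rcases hM with hsmall | hker
    · exact hsmall.gradedSupport_finite u
    · exact (ψ.finite_preimage_singleton h).subset
        (gradedSupport_subset_preimage_of_mem_coarsen hu)

/-- **Statement 16** (Theorem 2.70): the canonical natural monomorphism
`h_ψ^M : (⨁HOM^G_R(M,•))_[ψ] → ⨁HOM^H_{R_[ψ]}(M_[ψ], •_[ψ])` is an isomorphism — i.e. for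
every `G`-graded `R`-module `N` the subgroups `⨆_{g : G} Hom(M, N(g))` and
`⨆_{h : H} Hom(M_[ψ], N_[ψ](h))` of `M →ₗ[R] N` coincide — if and only if `M` is small or
`ker ψ` is finite. -/
theorem gradedHom_coarsening_iso_iff_small_or_ker_finite
    {G H R M : Type} [AddCommGroup G] [AddCommGroup H] [CommRing R]
    [AddCommGroup M] [Module R M]
    (ψ : G →+ H) (hψ : Function.Surjective ψ)
    (𝒜 : G → AddSubgroup R) (h𝒜 : IsGradedRing 𝒜)
    (ℳ : G → AddSubgroup M) (hℳ : IsGradedModule 𝒜 ℳ) :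
    (∀ (N : Type) [AddCommGroup N] [Module R N], ∀ 𝒩 : G → AddSubgroup N,
        IsGradedModule 𝒜 𝒩 →
          (⨆ g : G, gradedHomSubgroup (R := R) ℳ 𝒩 g)
            = ⨆ h : H, gradedHomSubgroup (R := R) (coarsen ψ ℳ) (coarsen ψ 𝒩) h) ↔
      (IsSmall 𝒜 ℳ ∨ Finite ψ.ker) :=
  gradedHom_coarsening_iso_iff_small_or_ker_finite_general ψ 𝒜 h𝒜 ℳ hℳ
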